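/- arXiv:1910.00854 — 7 statements merged into one kernel-verified Lean document; each statement's English description precedes it below -/
import Mathlib

section
/- Let m and n be distinct nonzero rational numbers. If nonzero rationals x, y satisfy x + m/x = y + n/y, then setting u = x*y and w = (m/x - y)*x*y, the point (u, w) satisfies w^2 = u*(u - m)*(u - n). -/
/-! Clearing denominators, the hypothesis reads `y (x² + m) = x (y² + n)` and `w = (m - xy) y`.
Then `w² - u (u - m) (u - n) = (xy - m) y (x (y² + n) - y (x² + m))`, which vanishes. -/

theorem sq_mul_eq_of_mul_sq_add_eq {R : Type*} [CommRing R] {m n x y : R}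
    (h : y * (x ^ 2 + m) = x * (y ^ 2 + n)) :
    ((m - x * y) * y) ^ 2 = x * y * (x * y - m) * (x * y - n) := by
  linear_combination (m - x * y) * y * h

theorem stmt2_general (m n x y u w : ℚ)
    (hx : x ≠ 0) (hy : y ≠ 0) (h : x + m / x = y + n / y)
    (hu : u = x * y) (hw : w = (m / x - y) * x * y) :
    w ^ 2 = u * (u - m) * (u - n) := by
  have hcleared : y * (x ^ 2 + m) = x * (y ^ 2 + n) := by
    field_simp at h
    linear_combination h
  have hw' : w = (m - x * y) * y := by
    rw [hw]
    field_simp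
  rw [hw', hu]
  exact sq_mul_eq_of_mul_sq_add_eq hcleared

theorem stmt2 (m n x y u w : ℚ) (hmn : m ≠ n) (hm : m ≠ 0) (hn : n ≠ 0)
    (hx : x ≠ 0) (hy : y ≠ 0) (h : x + m / x = y + n / y)
    (hu : u = x * y) (hw : w = (m / x - y) * x * y) :
    w ^ 2 = u * (u - m) * (u - n) :=
  stmt2_general m n x y u w hx hy h hu hw
end

section
/- If m1, m2, n1, n2 are nonzero rationals with m1 + m2 = n1 + n2, m = m1*m2, n = n1*n2 and m ≠ n, then each of the four points (m1*n1, (m2 - n1)*m1*n1), (m1*n2, (m1 - n1)*m1*n2), (m2*n1, (m1 - n1)*m2*n1), (m2*n2, (m2 - n1)*m2*n2) lies on the curve W^2 = U(U - m)(U - n). -/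
theorem stmt3 (m n m1 m2 n1 n2 : ℚ) (hm1 : m1 ≠ 0) (hm2 : m2 ≠ 0)
    (hn1 : n1 ≠ 0) (hn2 : n2 ≠ 0) (hsum : m1 + m2 = n1 + n2)
    (hm : m = m1 * m2) (hn : n = n1 * n2) (hmn : m ≠ n) :
    ((m2 - n1) * m1 * n1) ^ 2 = m1 * n1 * (m1 * n1 - m) * (m1 * n1 - n) ∧
    ((m1 - n1) * m1 * n2) ^ 2 = m1 * n2 * (m1 * n2 - m) * (m1 * n2 - n) ∧
    ((m1 - n1) * m2 * n1) ^ 2 = m2 * n1 * (m2 * n1 - m) * (m2 * n1 - n) ∧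
    ((m2 - n1) * m2 * n2) ^ 2 = m2 * n2 * (m2 * n2 - m) * (m2 * n2 - n) := by
  subst hm hn
  have h2 : n2 = m1 + m2 - n1 := by linarith
  subst h2
  refine ⟨by ring, by ring, by ring, by ring⟩
end

section
/- Let m, n be distinct nonzero rationals and suppose nonzero rationals x ≠ y satisfy x + m/x = y + n/y. Set z = x + m/x. Then (z/2)^2 * ((z/2)^2 - m) * ((z/2)^2 - n) = (z/2 * (z/2 - x) * (z/2 - y))^2; in particular the point with U-coordinate (z/2)^2 and W-coordinate z/2*(z/2 - x)*(z/2 - y) lies on the curve W^2 = U(U - m)(U - n). -/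
theorem stmt4 (m n x y z : ℚ) (hmn : m ≠ n) (hm : m ≠ 0) (hn : n ≠ 0)
    (hx : x ≠ 0) (hy : y ≠ 0) (hxy : x ≠ y) (h : x + m / x = y + n / y)
    (hz : z = x + m / x) :
    (z / 2) ^ 2 * ((z / 2) ^ 2 - m) * ((z / 2) ^ 2 - n) =
      (z / 2 * (z / 2 - x) * (z / 2 - y)) ^ 2 := by
  have hm' : m = x * (z - x) := by
    field_simp at hz; linarith [hz]
  have hn' : n = y * (z - y) := by
    rw [h] at hz; field_simp at hz; linarith [hz]
  subst hm' hn'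
  ring
end

section
/- Let a, b be nonzero integers with a ≠ ±b and l a nonzero rational with (a+b)*l^2/(a-b) not making the expressions degenerate. Define m = -((a^2+b^2)/(a^2-b^2))*l^2 and n = -(b^2/(a^2-b^2))*l^2. Then m = l * (-(a^2+b^2)/(a^2-b^2)*l), n = (-b/(a-b)*l) * (b/(a+b)*l), and l + (-(a^2+b^2)/(a^2-b^2)*l) = -b/(a-b)*l + b/(a+b)*l, i.e. (m, n) has an iso-additive representation. -/
theorem stmt10 (a b : ℤ) (ha : a ≠ 0) (hb : b ≠ 0) (hab : a ≠ b) (hab' : a ≠ -b)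
    (l m n : ℚ) (hl : l ≠ 0)
    (hm : m = -(((a : ℚ) ^ 2 + (b : ℚ) ^ 2) / ((a : ℚ) ^ 2 - (b : ℚ) ^ 2)) * l ^ 2)
    (hn : n = -((b : ℚ) ^ 2 / ((a : ℚ) ^ 2 - (b : ℚ) ^ 2)) * l ^ 2) :
    l ≠ 0 ∧ -(((a : ℚ) ^ 2 + (b : ℚ) ^ 2) / ((a : ℚ) ^ 2 - (b : ℚ) ^ 2)) * l ≠ 0 ∧
    -((b : ℚ) / ((a : ℚ) - (b : ℚ))) * l ≠ 0 ∧ ((b : ℚ) / ((a : ℚ) + (b : ℚ))) * l ≠ 0 ∧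
    m = l * (-(((a : ℚ) ^ 2 + (b : ℚ) ^ 2) / ((a : ℚ) ^ 2 - (b : ℚ) ^ 2)) * l) ∧
    n = (-((b : ℚ) / ((a : ℚ) - (b : ℚ))) * l) * (((b : ℚ) / ((a : ℚ) + (b : ℚ))) * l) ∧
    l + (-(((a : ℚ) ^ 2 + (b : ℚ) ^ 2) / ((a : ℚ) ^ 2 - (b : ℚ) ^ 2)) * l) =
      -((b : ℚ) / ((a : ℚ) - (b : ℚ))) * l + ((b : ℚ) / ((a : ℚ) + (b : ℚ))) * l := by
  have haQ : (a : ℚ) ≠ 0 := Int.cast_ne_zero.mpr ha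
  have hbQ : (b : ℚ) ≠ 0 := Int.cast_ne_zero.mpr hb
  have hsub : (a : ℚ) - b ≠ 0 := sub_ne_zero.mpr (by exact_mod_cast hab)
  have hadd : (a : ℚ) + b ≠ 0 := by
    intro h
    exact hab' (by exact_mod_cast eq_neg_of_add_eq_zero_left h)
  have hd : (a : ℚ) ^ 2 - (b : ℚ) ^ 2 ≠ 0 := by
    have : (a : ℚ) ^ 2 - (b : ℚ) ^ 2 = ((a : ℚ) - b) * ((a : ℚ) + b) := by ring
    rw [this]; exact mul_ne_zero hsub hadd
  have hnum : (a : ℚ) ^ 2 + (b : ℚ) ^ 2 ≠ 0 := by positivity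
  refine ⟨hl, ?_, ?_, ?_, by rw [hm]; ring, ?_, ?_⟩
  · exact mul_ne_zero (neg_ne_zero.mpr (div_ne_zero hnum hd)) hl
  · exact mul_ne_zero (neg_ne_zero.mpr (div_ne_zero hbQ hsub)) hl
  · exact mul_ne_zero (div_ne_zero hbQ hadd) hl
  · rw [hn]; field_simp; ring
  · field_simp; ring
end

section
/- On the elliptic curve W^2 = U(U - m)(U - n) with m, n distinct nonzero rationals, given a point P1 = (xy, (m/x - y)xy) coming from a solution of x + m/x = y + n/y with x, y nonzero, x ≠ y, the point P1 is not 2-torsion; i.e., P1 ≠ -P1, equivalently (m/x - y)*x*y ≠ 0. -/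
theorem stmt14 (m n x y : ℚ) (hmn : m ≠ n) (hm : m ≠ 0) (hn : n ≠ 0)
    (hx : x ≠ 0) (hy : y ≠ 0) (hxy : x ≠ y) (h : x + m / x = y + n / y) :
    (m / x - y) * x * y ≠ 0 := by
  intro hc
  have h1 : m / x - y = 0 := by
    rcases mul_eq_zero.1 hc with h' | h'
    · rcases mul_eq_zero.1 h' with h'' | h''
      · exact h''
      · exact absurd h'' hx
    · exact absurd h' hy
  have hmxy : m = x * y := by
    field_simp at h1; linarith
  have h2 : x + y = y + n / y := by
    rw [hmxy] at h
    field_simp at h ⊢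
    linarith
  have hn2 : n = x * y := by
    field_simp at h2
    linarith
  exact hmn (hmxy.trans hn2.symm)
end

section
/- There is no arithmetic progression of four distinct rational squares; i.e., there do not exist rationals a1 < a2 < a3 < a4 in arithmetic progression all of which are squares of rationals and pairwise distinct. -/
/-!
Euler's descent. Clearing denominators and common factors, an AP `p², q², r², s²` of
integer squares may be assumed to have `q, r` coprime, and then all four terms are odd.
Parametrising `p² + r² = 2q²` and `s² + q² = 2r²` by Pythagorean triples gives
`q = m² + n² = u² + 2uv - v²` and `r = m² + 2mn - n² = u² + v²`, i.e.
`m (m + n) = u (u + v)` and `n (m - n) = v (v - u)`. Factoring both products through gcds,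
`m = a m₀`, `u = a u₀`, `n = b n₀`, `v = b v₀`, and eliminating the remaining unknowns leaves
`u₀² (n₀² + 2v₀²) = m₀² (2n₀² + v₀²)`. Coprimality forces `n₀² + 2v₀² = 3m₀²` and
`2n₀² + v₀² = 3u₀²` (the factor `1` is impossible modulo 4), so `v₀², m₀², u₀², n₀²` is a
new AP whose middle terms are smaller than `q` and `r`.
-/

namespace Int

theorem sq_emod_four (x : ℤ) : x ^ 2 % 4 = 0 ∧ x % 2 = 0 ∨ x ^ 2 % 4 = 1 ∧ x % 2 = 1 := by
  rcases x.even_or_odd with ⟨k, rfl⟩ | hx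
  · left
    ring_nf
    omega
  · exact .inr ⟨sq_mod_four_eq_one_of_odd hx, odd_iff.mp hx⟩

theorem not_two_dvd_and_two_dvd_of_isCoprime {a b : ℤ} (h : IsCoprime a b) :
    ¬ (2 ∣ a ∧ 2 ∣ b) :=
  fun h2 => by simpa [Int.isUnit_iff] using h.isUnit_of_dvd' h2.1 h2.2

theorem abs_le_mul_sq {c : ℤ} (hc : c ≠ 0) (x : ℤ) : |x| ≤ (c * x) ^ 2 := by
  rcases eq_or_ne x 0 with rfl | hx
  · simp
  have hx₁ := one_le_abs hx
  calc |x| ≤ |x| ^ 2 := by nlinarith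
    _ ≤ |c| ^ 2 * |x| ^ 2 := le_mul_of_one_le_left (sq_nonneg _) (one_le_pow₀ (one_le_abs hc))
    _ = (c * x) ^ 2 := by rw [sq_abs, sq_abs, mul_pow]

theorem two_dvd_of_sq_add_sq_eq_two_mul_sq {p q r : ℤ} (h : p ^ 2 + r ^ 2 = 2 * q ^ 2)
    (hq : 2 ∣ q) : 2 ∣ p ∧ 2 ∣ r := by
  obtain ⟨k, rfl⟩ := hq
  have : 2 * (2 * k) ^ 2 = 8 * k ^ 2 := by ring
  rcases sq_emod_four p with hp | hp <;> rcases sq_emod_four r with hr | hr <;> omega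

theorem exists_of_sq_add_sq_eq_two_mul_sq {p q r : ℤ} (h : p ^ 2 + r ^ 2 = 2 * q ^ 2)
    (hpr : IsCoprime p r) (hq : 0 ≤ q) :
    ∃ m n : ℤ, q = m ^ 2 + n ^ 2 ∧ r = m ^ 2 + 2 * m * n - n ^ 2 := by
  have hpr₂ := not_two_dvd_and_two_dvd_of_isCoprime hpr
  obtain ⟨x, hx⟩ : 2 ∣ r - p := by
    rcases sq_emod_four p with hp | hp <;> rcases sq_emod_four r with hr | hr <;> omega
  obtain rfl : r = p + 2 * x := by linarith
  have htriple : PythagoreanTriple x (p + x) q :=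
    mul_left_cancel₀ two_ne_zero (by linear_combination h)
  have hcop : Int.gcd x (p + x) = 1 := by
    obtain ⟨e, f, hef⟩ := hpr
    exact isCoprime_iff_gcd_eq_one.mp ⟨f - e, e + f, by linear_combination hef⟩
  obtain ⟨m, n, hxy, hqmn, -⟩ := PythagoreanTriple.coprime_classification.mp ⟨htriple, hcop⟩
  refine ⟨m, n, ?_, ?_⟩
  · rcases hqmn with hqmn | hqmn
    · exact hqmn
    · nlinarith [sq_nonneg m, sq_nonneg n]
  · rcases hxy with ⟨hx, hy⟩ | ⟨hx, hy⟩ <;> linear_combination hx + hy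

theorem exists_eq_mul_of_mul_eq_mul {x y z t : ℤ} (hx : x ≠ 0) (h : x * y = z * t) :
    ∃ a x' z' w : ℤ, IsCoprime x' z' ∧ x = a * x' ∧ z = a * z' ∧ y = z' * w ∧ t = x' * w := by
  obtain ⟨g, x', z', hg, hcop, rfl, rfl⟩ := exists_gcd_one' (gcd_pos_of_ne_zero_left z hx)
  have hcop := isCoprime_iff_gcd_eq_one.mpr hcop
  have hx' : x' ≠ 0 := left_ne_zero_of_mul hx
  have h' : x' * y = z' * t :=
    mul_left_cancel₀ (natCast_ne_zero.mpr hg.ne') (by linear_combination h)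
  obtain ⟨w, rfl⟩ := hcop.dvd_of_dvd_mul_left ⟨y, h'.symm⟩
  exact ⟨g, x', z', w, hcop, mul_comm _ _, mul_comm _ _,
    mul_left_cancel₀ hx' (by linear_combination h'), rfl⟩

end Int

def SquaresInAP {R : Type*} [CommRing R] (p q r s : R) : Prop :=
  p ^ 2 + r ^ 2 = 2 * q ^ 2 ∧ q ^ 2 + s ^ 2 = 2 * r ^ 2

namespace SquaresInAP

section CommRing

variable {R : Type*} [CommRing R] {p q r s : R}

theorem mul (h : SquaresInAP p q r s) (c : R) : SquaresInAP (c * p) (c * q) (c * r) (c * s) :=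
  ⟨by linear_combination c ^ 2 * h.1, by linear_combination c ^ 2 * h.2⟩

theorem of_mul [IsDomain R] {c : R} (hc : c ≠ 0)
    (h : SquaresInAP (c * p) (c * q) (c * r) (c * s)) : SquaresInAP p q r s :=
  ⟨mul_left_cancel₀ (pow_ne_zero 2 hc) (by linear_combination h.1),
    mul_left_cancel₀ (pow_ne_zero 2 hc) (by linear_combination h.2)⟩

theorem of_map {S : Type*} [CommRing S] {f : R →+* S} (hf : Function.Injective f)
    (h : SquaresInAP (f p) (f q) (f r) (f s)) : SquaresInAP p q r s := by
  simpa only [SquaresInAP, ← map_pow, ← map_ofNat f 2, ← map_mul, ← map_add, hf.eq_iff] using h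

end CommRing

theorem abs {R : Type*} [CommRing R] [LinearOrder R] [IsStrictOrderedRing R] {p q r s : R}
    (h : SquaresInAP p q r s) : SquaresInAP |p| |q| |r| |s| := by
  simpa only [SquaresInAP, sq_abs] using h

end SquaresInAP

theorem squaresInAP_of_sq_mul_eq_sq_mul {m n u v : ℤ} (hum : IsCoprime u m) (hvn : IsCoprime v n)
    (h : u ^ 2 * (n ^ 2 + 2 * v ^ 2) = m ^ 2 * (2 * n ^ 2 + v ^ 2)) : SquaresInAP v m u n := by
  have hpos : 0 < n ^ 2 + 2 * v ^ 2 := by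
    rcases hvn.ne_zero_or_ne_zero with h0 | h0 <;> positivity
  have hm : m ≠ 0 := by
    rintro rfl
    obtain rfl : u = 0 := by simpa [hpos.ne'] using h
    exact not_isUnit_zero (isCoprime_zero_left.mp hum)
  obtain ⟨k, hk₁⟩ : m ^ 2 ∣ n ^ 2 + 2 * v ^ 2 := hum.symm.pow.dvd_of_dvd_mul_left ⟨_, h⟩
  have hk₂ : 2 * n ^ 2 + v ^ 2 = u ^ 2 * k :=
    mul_left_cancel₀ (pow_ne_zero 2 hm) (by linear_combination -h + u ^ 2 * hk₁)
  -- `k` divides `2 (2n² + v²) - (n² + 2v²) = 3n²` and likewise `3v²`.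
  obtain ⟨α, β, hαβ⟩ : IsCoprime (n ^ 2) (v ^ 2) := hvn.symm.pow
  have hk₃ : k ∣ 3 := ⟨α * (2 * u ^ 2 - m ^ 2) + β * (2 * m ^ 2 - u ^ 2), by
    linear_combination (-3) * hαβ + (2 * β - α) * hk₁ + (2 * α - β) * hk₂⟩
  have hk₀ : 0 < k := pos_of_mul_pos_right (hk₁ ▸ hpos) (sq_nonneg m)
  have hk : k = 3 := by
    have hk₄ := Int.le_of_dvd three_pos hk₃
    interval_cases k
    · have := Int.not_two_dvd_and_two_dvd_of_isCoprime hvn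
      rcases Int.sq_emod_four n with hn | hn <;> rcases Int.sq_emod_four v with hv | hv <;>
        rcases Int.sq_emod_four m with hm | hm <;> rcases Int.sq_emod_four u with hu | hu <;> omega
    · norm_num at hk₃
    · rfl
  subst hk
  constructor <;> linarith

theorem exists_squaresInAP_of_mul_eq_mul {m n u v : ℤ} (hm : m ≠ 0) (hn : n ≠ 0)
    (h₁ : m * (m + n) = u * (u + v)) (h₂ : n * (m - n) = v * (v - u)) :
    ∃ a b m₀ n₀ u₀ v₀ : ℤ,
      m = a * m₀ ∧ u = a * u₀ ∧ n = b * n₀ ∧ v = b * v₀ ∧ SquaresInAP v₀ m₀ u₀ n₀ := by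
  obtain ⟨a, m₀, u₀, w, hmu, rfl, rfl, hw₁, hw₂⟩ := Int.exists_eq_mul_of_mul_eq_mul hm h₁
  obtain ⟨b, n₀, v₀, z, hnv, rfl, rfl, hz₁, hz₂⟩ := Int.exists_eq_mul_of_mul_eq_mul hn h₂
  refine ⟨a, b, m₀, n₀, u₀, v₀, rfl, rfl, rfl, rfl, squaresInAP_of_sq_mul_eq_sq_mul hmu.symm
    hnv.symm (mul_left_cancel₀ (left_ne_zero_of_mul hm) ?_)⟩
  -- `hw₁, hw₂, hz₁, hz₂` are linear in `(a, b, w, z)` and have a solution with `a ≠ 0`, so the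
  -- determinant of the system, which is the difference of the two sides, vanishes.
  linear_combination (n₀ ^ 2 + v₀ ^ 2) * (u₀ * hw₂ - m₀ * hw₁) +
    (m₀ * n₀ - u₀ * v₀) * (v₀ * hz₂ - n₀ * hz₁)

namespace SquaresInAP

variable {p q r s : ℤ}

theorem odd_of_isCoprime (h : SquaresInAP p q r s) (hqr : IsCoprime q r) : Odd q ∧ Odd r := by
  have hqr₂ := Int.not_two_dvd_and_two_dvd_of_isCoprime hqr
  simp only [← Int.not_even_iff_odd, even_iff_two_dvd]
  exact ⟨fun hq => hqr₂ ⟨hq, (Int.two_dvd_of_sq_add_sq_eq_two_mul_sq h.1 hq).2⟩,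
    fun hr => hqr₂ ⟨(Int.two_dvd_of_sq_add_sq_eq_two_mul_sq h.2 hr).1, hr⟩⟩

theorem isCoprime_of_isCoprime (h : SquaresInAP p q r s) (hqr : IsCoprime q r) :
    IsCoprime p r ∧ IsCoprime s q := by
  obtain ⟨hq, hr⟩ := h.odd_of_isCoprime hqr
  have hp : p ^ 2 = 2 * q ^ 2 + r ^ 2 * (-1) := by linear_combination h.1
  have hs : s ^ 2 = 2 * r ^ 2 + q ^ 2 * (-1) := by linear_combination h.2
  constructor
  · rw [← IsCoprime.pow_iff two_pos two_pos, hp]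
    exact ((Int.isCoprime_two_left.mpr hr.pow).mul_left hqr.pow).add_mul_left_left _
  · rw [← IsCoprime.pow_iff two_pos two_pos, hs]
    exact ((Int.isCoprime_two_left.mpr hq.pow).mul_left hqr.symm.pow).add_mul_left_left _

theorem exists_lt (h : SquaresInAP p q r s) (hqr : IsCoprime q r) (hq : 0 ≤ q) (hr : 0 ≤ r)
    (hne : q ≠ r) :
    ∃ p' q' r' s' : ℤ, SquaresInAP p' q' r' s' ∧ q' ^ 2 ≠ r' ^ 2 ∧ |q'| + |r'| < q + r := by
  obtain ⟨hpr, hsq⟩ := h.isCoprime_of_isCoprime hqr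
  obtain ⟨m, n, hqmn, hrmn⟩ := Int.exists_of_sq_add_sq_eq_two_mul_sq h.1 hpr hq
  obtain ⟨u, v, hruv, hquv⟩ :=
    Int.exists_of_sq_add_sq_eq_two_mul_sq (by linear_combination h.2) hsq hr
  have hm : m ≠ 0 := by
    rintro rfl
    exact hne (by nlinarith [sq_nonneg n])
  have hn : n ≠ 0 := by
    rintro rfl
    exact hne (by linear_combination hqmn - hrmn)
  have hv : v ≠ 0 := by
    rintro rfl
    exact hne (by linear_combination hquv - hruv)
  have h₁ : m * (m + n) = u * (u + v) := by linarith
  have h₂ : n * (m - n) = v * (v - u) := by linarith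
  obtain ⟨a, b, m₀, n₀, u₀, v₀, rfl, rfl, rfl, rfl, hAP⟩ :=
    exists_squaresInAP_of_mul_eq_mul hm hn h₁ h₂
  refine ⟨v₀, m₀, u₀, n₀, hAP, fun hmu => hne ?_, ?_⟩
  · linear_combination hqmn - hruv + a ^ 2 * hmu + b ^ 2 * (hAP.2 - hAP.1 - 3 * hmu)
  · have ha := left_ne_zero_of_mul hm
    have := Int.abs_le_mul_sq ha m₀
    have := Int.abs_le_mul_sq ha u₀
    have : 0 < (b * n₀) ^ 2 := by positivity
    have : 0 < (b * v₀) ^ 2 := by positivity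
    linarith

theorem exists_isCoprime (h : SquaresInAP p q r s) (hne : q ^ 2 ≠ r ^ 2) :
    ∃ p' q' r' s' : ℤ, SquaresInAP p' q' r' s' ∧ IsCoprime q' r' ∧ 0 ≤ q' ∧ 0 ≤ r' ∧ q' ≠ r' ∧
      q' + r' ≤ |q| + |r| := by
  have hqr : q ≠ 0 ∨ r ≠ 0 := by
    by_contra! h0
    exact hne (by rw [h0.1, h0.2])
  obtain ⟨g, q', r', hg, hcop, rfl, rfl⟩ := Int.exists_gcd_one' (Int.gcd_pos_iff.mpr hqr)
  obtain ⟨p', rfl⟩ : (g : ℤ) ∣ p := by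
    rw [← Int.pow_dvd_pow_iff two_ne_zero]
    exact ⟨2 * q' ^ 2 - r' ^ 2, by linear_combination h.1⟩
  obtain ⟨s', rfl⟩ : (g : ℤ) ∣ s := by
    rw [← Int.pow_dvd_pow_iff two_ne_zero]
    exact ⟨2 * r' ^ 2 - q' ^ 2, by linear_combination h.2⟩
  have hg₀ : (g : ℤ) ≠ 0 := by positivity
  have h' : SquaresInAP p' q' r' s' := .of_mul hg₀ (by simpa only [mul_comm _ (g : ℤ)] using h)
  refine ⟨|p'|, |q'|, |r'|, |s'|, h'.abs, (IsCoprime.abs_abs_iff _ _).mpr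
    (Int.isCoprime_iff_gcd_eq_one.mpr hcop), abs_nonneg _, abs_nonneg _, fun habs => hne ?_, ?_⟩
  · rw [mul_pow, mul_pow, ← sq_abs q', habs, sq_abs]
  · have : (1 : ℤ) ≤ g := by exact_mod_cast hg
    rw [abs_mul, abs_mul, Nat.abs_cast]
    nlinarith [abs_nonneg q', abs_nonneg r']

theorem sq_eq_sq (h : SquaresInAP p q r s) : q ^ 2 = r ^ 2 := by
  induction hk : (|q| + |r|).toNat using Nat.strong_induction_on generalizing p q r s with
  | _ k ih =>
  by_contra hne
  obtain ⟨p', q', r', s', h', hqr', hq', hr', hne', hle⟩ := h.exists_isCoprime hne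
  obtain ⟨p'', q'', r'', s'', h'', hne'', hlt⟩ := h'.exists_lt hqr' hq' hr' hne'
  exact hne'' (ih _ (by omega) h'' rfl)

end SquaresInAP

theorem Rat.sq_eq_sq_of_squaresInAP {p q r s : ℚ} (h : SquaresInAP p q r s) : q ^ 2 = r ^ 2 := by
  obtain ⟨⟨d, hd⟩, hint⟩ :=
    IsLocalization.exist_integer_multiples_of_finite (nonZeroDivisors ℤ) ![p, q, r, s]
  choose x hx using hint
  have hd₀ : (d : ℚ) ≠ 0 := by exact_mod_cast nonZeroDivisors.ne_zero hd
  have hx' (i : Fin 4) : (x i : ℚ) = d * ![p, q, r, s] i := by simpa using hx i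
  have hAP : SquaresInAP (x 0) (x 1) (x 2) (x 3) :=
    .of_map (f := Int.castRingHom ℚ) Int.cast_injective (by simpa [hx'] using h.mul (d : ℚ))
  have hsq := congrArg (Int.cast : ℤ → ℚ) hAP.sq_eq_sq
  push_cast [hx'] at hsq
  exact mul_left_cancel₀ (pow_ne_zero 2 hd₀) (by linear_combination hsq)

theorem stmt17 :
    ¬ ∃ a1 a2 a3 a4 : ℚ, a1 < a2 ∧ a2 < a3 ∧ a3 < a4 ∧
      a2 - a1 = a3 - a2 ∧ a3 - a2 = a4 - a3 ∧
      (∃ r : ℚ, a1 = r ^ 2) ∧ (∃ r : ℚ, a2 = r ^ 2) ∧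
      (∃ r : ℚ, a3 = r ^ 2) ∧ (∃ r : ℚ, a4 = r ^ 2) := by
  rintro ⟨a1, a2, a3, a4, -, h23, -, hd₁, hd₂, ⟨p, rfl⟩, ⟨q, rfl⟩, ⟨r, rfl⟩, ⟨s, rfl⟩⟩
  have h : SquaresInAP p q r s := ⟨by linarith, by linarith⟩
  exact h23.ne (Rat.sq_eq_sq_of_squaresInAP h)
end

section
/- Let m, n be distinct nonzero rationals and suppose m1, m2, n1, n2 are nonzero rationals with m = m1*m2, n = n1*n2, m1 + m2 = n1 + n2. On the curve W^2 = U(U-m)(U-n), the points P1 = (m1 n1, (m2 - n1) m1 n1) and P4 = (m2 n2, (m2 - n1) m2 n2) satisfy: P1, P4 and (0,0) are collinear with the line W = λU where λ = m2 - n1; i.e., the line through the origin with slope m2 - n1 passes through both P1 and P4. -/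
theorem stmt19 (m n m1 m2 n1 n2 : ℚ) (hmn : m ≠ n) (hm : m ≠ 0) (hn : n ≠ 0)
    (hm1 : m1 ≠ 0) (hm2 : m2 ≠ 0) (hn1 : n1 ≠ 0) (hn2 : n2 ≠ 0)
    (hmm : m = m1 * m2) (hnn : n = n1 * n2) (hsum : m1 + m2 = n1 + n2) :
    (m2 - n1) * m1 * n1 = (m2 - n1) * (m1 * n1) ∧
    (m2 - n1) * m2 * n2 = (m2 - n1) * (m2 * n2) ∧
    ((m2 - n1) * m1 * n1) ^ 2 = m1 * n1 * (m1 * n1 - m) * (m1 * n1 - n) ∧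
    ((m2 - n1) * m2 * n2) ^ 2 = m2 * n2 * (m2 * n2 - m) * (m2 * n2 - n) := by
  have h2 : n2 = m1 + m2 - n1 := by linarith
  subst hmm hnn h2
  exact ⟨by ring, by ring, by ring, by ring⟩
end
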